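/- Let q : ℝ → ℝ be four times continuously differentiable, satisfying the Painlevé II equation q''(x) = x·q(x) + 2 q(x)³ for all x ∈ ℝ, and assume the decay bounds |q(x)| ≤ C e^{−x} and |q'(x)| ≤ C e^{−x} for all x ≥ 0 (so the integrals below converge). Define g(u) := ∫_u^∞ (u − α) q(α)² dα, G₁(u) := ∫_u^∞ q'(α)² dα, G₂(u) := ∫_u^∞ q(α)⁴ dα, and h₄(u, v) := ½ ( g''(u) g'(v)² + g''(v) g'(u)² + g''(u) g''(v) ) + g'(u) ( 2 g(v) + G₁(v) − G₂(v) ) + g'(v) ( 2 g(u) + G₁(u) − G₂(u) ). Then for all (u, v) ∈ ℝ², (∂/∂u − ∂/∂v) ∂²h₄/∂u∂v = 2 ( g'''(u) g''(v)² − g'''(v) g''(u)² ) + g'''(u) g'''(v) ( g'(u) − g'(v) ) + g''''(u) g'(v) g''(v) − g''''(v) g'(u) g''(u) + ( g'''(u) g''(v) + g'''(v) g''(u) ) (u − v) + 2 ( g'''(u) g'(v) − g'''(v) g'(u) ). -/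

import Mathlib

open MeasureTheory

noncomputable section

/-- `∂/∂u` on functions of `(u,v)`. -/
def pd1 (f : ℝ × ℝ → ℝ) (p : ℝ × ℝ) : ℝ := deriv (fun u => f (u, p.2)) p.1

/-- `∂/∂v` on functions of `(u,v)`. -/
def pd2 (f : ℝ × ℝ → ℝ) (p : ℝ × ℝ) : ℝ := deriv (fun v => f (p.1, v)) p.2

/-- `g(u) := ∫_u^∞ (u − α) q(α)² dα`. -/
def gFun (q : ℝ → ℝ) (u : ℝ) : ℝ := ∫ α in Set.Ioi u, (u - α) * q α ^ 2

/-- `G₁(u) := ∫_u^∞ q'(α)² dα`. -/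
def G1Fun (q : ℝ → ℝ) (u : ℝ) : ℝ := ∫ α in Set.Ioi u, (deriv q α) ^ 2

/-- `G₂(u) := ∫_u^∞ q(α)⁴ dα`. -/
def G2Fun (q : ℝ → ℝ) (u : ℝ) : ℝ := ∫ α in Set.Ioi u, q α ^ 4

/-- The function `h₄(u,v)` of (6.14). -/
def h4Fun (q : ℝ → ℝ) (p : ℝ × ℝ) : ℝ :=
  (1 / 2) * (deriv (deriv (gFun q)) p.1 * (deriv (gFun q) p.2) ^ 2
      + deriv (deriv (gFun q)) p.2 * (deriv (gFun q) p.1) ^ 2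
      + deriv (deriv (gFun q)) p.1 * deriv (deriv (gFun q)) p.2)
    + deriv (gFun q) p.1 * (2 * gFun q p.2 + G1Fun q p.2 - G2Fun q p.2)
    + deriv (gFun q) p.2 * (2 * gFun q p.1 + G1Fun q p.1 - G2Fun q p.1)

/-!
Writing `a = g'` and `φ = 2g + G₁ − G₂`, `h₄(u,v)` is a sum of products of a function of `u`
and a function of `v` built from `a`, `a'` and `φ`. It is symmetric in `(u,v)`, hence so is
`∂u∂v h₄`, and `(∂u − ∂v) ∂u∂v h₄` is the antisymmetrisation of `∂u²∂v h₄`, which is computed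
term by term. The tail integrals give `a' = −q²`, `a'' = −2qq'` and `φ' = 2a − q'² + q⁴`, so both
sides become polynomials in `a`, `q`, `q'`, `q''` at `u` and `v`; they agree identically once
`q'' = xq + 2q³` is substituted.
-/
open Set Filter Asymptotics

theorem hasDerivAt_integral_Ioi {f : ℝ → ℝ} (hf : Continuous f)
    (hint : ∀ a, IntegrableOn f (Ioi a)) (u : ℝ) :
    HasDerivAt (fun t => ∫ α in Ioi t, f α) (-f u) u := by
  have hsplit : (fun t => ∫ α in Ioi t, f α) =
      fun t => (∫ α in Ioi u, f α) - ∫ α in u..t, f α := by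
    funext t
    rw [← intervalIntegral.integral_Ioi_sub_Ioi' (hint u) (hint t), sub_sub_cancel]
  rw [hsplit]
  exact (hf.integral_hasStrictDerivAt u u).hasDerivAt.const_sub _

theorem isBigO_exp_neg_of_abs_le {f : ℝ → ℝ} {C : ℝ}
    (h : ∀ x, 0 ≤ x → |f x| ≤ C * Real.exp (-x)) :
    f =O[atTop] fun x => Real.exp (-x) :=
  IsBigO.of_bound C <| (eventually_ge_atTop 0).mono fun x hx => by
    simpa [abs_of_pos (Real.exp_pos _)] using h x hx

theorem integrableOn_Ioi_mul_of_isBigO {f k : ℝ → ℝ} (hf : Continuous f) (hk : Continuous k)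
    (hfO : f =O[atTop] fun x => Real.exp (-x)) (hkO : k =O[atTop] fun _ => (1 : ℝ)) (a : ℝ) :
    IntegrableOn (fun x => f x * k x) (Ioi a) :=
  integrable_of_isBigO_exp_neg one_pos (hf.mul hk).continuousOn (by simpa using hfO.mul hkO)

section Tails

variable {q : ℝ → ℝ}

theorem isBigO_one_of_isBigO_exp_neg (hqO : q =O[atTop] fun x => Real.exp (-x)) :
    q =O[atTop] fun _ => (1 : ℝ) :=
  hqO.trans (Real.tendsto_exp_neg_atTop_nhds_zero.isBigO_one ℝ)

theorem integrableOn_Ioi_sq_of_isBigO (hq : Continuous q)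
    (hqO : q =O[atTop] fun x => Real.exp (-x)) (a : ℝ) :
    IntegrableOn (fun x => q x ^ 2) (Ioi a) := by
  simpa only [sq] using
    integrableOn_Ioi_mul_of_isBigO hq hq hqO (isBigO_one_of_isBigO_exp_neg hqO) a

theorem integrableOn_Ioi_pow_four_of_isBigO (hq : Continuous q)
    (hqO : q =O[atTop] fun x => Real.exp (-x)) (a : ℝ) :
    IntegrableOn (fun x => q x ^ 4) (Ioi a) := by
  have hq3 := (isBigO_one_of_isBigO_exp_neg hqO).pow 3
  simp only [one_pow] at hq3
  simpa only [← pow_succ'] using integrableOn_Ioi_mul_of_isBigO hq (by fun_prop) hqO hq3 a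

theorem integrableOn_Ioi_id_mul_sq_of_isBigO (hq : Continuous q)
    (hqO : q =O[atTop] fun x => Real.exp (-x)) (a : ℝ) :
    IntegrableOn (fun x => x * q x ^ 2) (Ioi a) := by
  have hxq : (fun x => x * q x) =O[atTop] fun _ => (1 : ℝ) := by
    refine ((isBigO_refl (fun x : ℝ => x) atTop).mul hqO).trans ?_
    simpa using (Real.tendsto_pow_mul_exp_neg_atTop_nhds_zero 1).isBigO_one ℝ
  refine (integrableOn_Ioi_mul_of_isBigO hq (by fun_prop) hqO hxq a).congr_fun
    (fun x _ => by ring) measurableSet_Ioi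

theorem gFun_eq_sub (u : ℝ) (hq2 : IntegrableOn (fun x => q x ^ 2) (Ioi u))
    (hxq2 : IntegrableOn (fun x => x * q x ^ 2) (Ioi u)) :
    gFun q u = u * (∫ α in Ioi u, q α ^ 2) - ∫ α in Ioi u, α * q α ^ 2 := by
  rw [← integral_const_mul, ← integral_sub (hq2.const_mul u) hxq2, gFun]
  congr 1 with α
  ring

theorem hasDerivAt_gFun (hq : Continuous q)
    (hqO : q =O[atTop] fun x => Real.exp (-x)) (u : ℝ) :
    HasDerivAt (gFun q) (∫ α in Ioi u, q α ^ 2) u := by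
  have hq2 := integrableOn_Ioi_sq_of_isBigO hq hqO
  have hxq2 := integrableOn_Ioi_id_mul_sq_of_isBigO hq hqO
  have hg : gFun q = fun t => t * (∫ α in Ioi t, q α ^ 2) - ∫ α in Ioi t, α * q α ^ 2 :=
    funext fun t => gFun_eq_sub t (hq2 t) (hxq2 t)
  rw [hg]
  have hA := hasDerivAt_integral_Ioi (by fun_prop) hq2 u
  have hB := hasDerivAt_integral_Ioi (by fun_prop) hxq2 u
  exact (((hasDerivAt_id' u).mul hA).sub hB).congr_deriv (by ring)

theorem hasDerivAt_two_mul_gFun_add_G1Fun_sub_G2Fun (hq : Continuous q)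
    (hqO : q =O[atTop] fun x => Real.exp (-x)) (hq' : Continuous (deriv q))
    (hq'O : deriv q =O[atTop] fun x => Real.exp (-x)) (u : ℝ) :
    HasDerivAt (fun x => 2 * gFun q x + G1Fun q x - G2Fun q x)
      (2 * (∫ α in Ioi u, q α ^ 2) - deriv q u ^ 2 + q u ^ 4) u := by
  have hG1 := hasDerivAt_integral_Ioi (by fun_prop) (integrableOn_Ioi_sq_of_isBigO hq' hq'O) u
  have hG2 := hasDerivAt_integral_Ioi (by fun_prop) (integrableOn_Ioi_pow_four_of_isBigO hq hqO) u
  exact ((((hasDerivAt_gFun hq hqO u).const_mul 2).add hG1).sub hG2).congr_deriv (by ring)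

end Tails

def h4Of (a a' φ : ℝ → ℝ) (p : ℝ × ℝ) : ℝ :=
  (1 / 2) * (a' p.1 * a p.2 ^ 2 + a' p.2 * a p.1 ^ 2 + a' p.1 * a' p.2)
    + a p.1 * φ p.2 + a p.2 * φ p.1

theorem h4Fun_eq_h4Of (q : ℝ → ℝ) :
    h4Fun q = h4Of (deriv (gFun q)) (deriv (deriv (gFun q)))
      (fun u => 2 * gFun q u + G1Fun q u - G2Fun q u) := rfl

theorem pd2_eq_pd1_swap {f : ℝ × ℝ → ℝ} (hf : ∀ x y, f (x, y) = f (y, x)) (p : ℝ × ℝ) :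
    pd2 f p = pd1 f p.swap := by
  simp only [pd1, pd2, Prod.fst_swap, Prod.snd_swap, hf p.1]

section h4Of

variable {a a' a'' a''' φ φ' φ'' : ℝ → ℝ}

theorem pd2_h4Of (ha : ∀ x, HasDerivAt a (a' x) x) (ha' : ∀ x, HasDerivAt a' (a'' x) x)
    (hφ : ∀ x, HasDerivAt φ (φ' x) x) :
    pd2 (h4Of a a' φ) = fun p => (1 / 2) * (2 * a' p.1 * a p.2 * a' p.2
      + a'' p.2 * a p.1 ^ 2 + a' p.1 * a'' p.2) + a p.1 * φ' p.2 + a' p.2 * φ p.1 := by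
  funext ⟨u, v⟩
  have H := ((((((ha v).pow 2).const_mul (a' u)).add ((ha' v).mul_const (a u ^ 2))).add
    ((ha' v).const_mul (a' u))).const_mul (1 / 2) |>.add ((hφ v).const_mul (a u))) |>.add
    ((ha v).mul_const (φ u))
  exact H.deriv.trans (by ring)

theorem pd1_pd2_h4Of (ha : ∀ x, HasDerivAt a (a' x) x) (ha' : ∀ x, HasDerivAt a' (a'' x) x)
    (hφ : ∀ x, HasDerivAt φ (φ' x) x) :
    pd1 (pd2 (h4Of a a' φ)) = fun p => (1 / 2) * (2 * a'' p.1 * a p.2 * a' p.2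
      + 2 * a'' p.2 * a p.1 * a' p.1 + a'' p.1 * a'' p.2) + a' p.1 * φ' p.2 + a' p.2 * φ' p.1 := by
  funext ⟨u, v⟩
  rw [pd1, pd2_h4Of ha ha' hφ]
  have H := (((((ha' u).mul_const (2 * a v * a' v)).add
    (((ha u).pow 2).mul_const (a'' v))).add ((ha' u).mul_const (a'' v))).const_mul (1 / 2)
    |>.add ((ha u).mul_const (φ' v))) |>.add ((hφ u).const_mul (a' v))
  refine (H.congr_of_eventuallyEq (.of_forall fun x => ?_)).deriv.trans (by ring)
  simp only [Pi.add_apply, Pi.pow_apply]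
  ring

theorem pd1_pd1_pd2_h4Of (ha : ∀ x, HasDerivAt a (a' x) x)
    (ha' : ∀ x, HasDerivAt a' (a'' x) x) (ha'' : ∀ x, HasDerivAt a'' (a''' x) x)
    (hφ : ∀ x, HasDerivAt φ (φ' x) x) (hφ' : ∀ x, HasDerivAt φ' (φ'' x) x) (u v : ℝ) :
    pd1 (pd1 (pd2 (h4Of a a' φ))) (u, v) = (1 / 2) * (2 * a''' u * a v * a' v
      + 2 * a'' v * (a' u ^ 2 + a u * a'' u) + a''' u * a'' v) + a'' u * φ' v + a' v * φ'' u := by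
  rw [pd1, pd1_pd2_h4Of ha ha' hφ]
  have H := (((((ha'' u).mul_const (2 * a v * a' v)).add
    (((ha u).mul (ha' u)).mul_const (2 * a'' v))).add ((ha'' u).mul_const (a'' v))).const_mul
    (1 / 2) |>.add ((ha' u).mul_const (φ' v))) |>.add ((hφ' u).const_mul (a' v))
  refine (H.congr_of_eventuallyEq (.of_forall fun x => ?_)).deriv.trans (by ring)
  simp only [Pi.add_apply, Pi.mul_apply]
  ring

theorem pd2_pd1_pd2_h4Of (ha : ∀ x, HasDerivAt a (a' x) x)
    (ha' : ∀ x, HasDerivAt a' (a'' x) x) (hφ : ∀ x, HasDerivAt φ (φ' x) x) (u v : ℝ) :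
    pd2 (pd1 (pd2 (h4Of a a' φ))) (u, v) = pd1 (pd1 (pd2 (h4Of a a' φ))) (v, u) :=
  pd2_eq_pd1_swap (fun x y => by simp only [pd1_pd2_h4Of ha ha' hφ]; ring) (u, v)

end h4Of

/-- **Equation (6.13).**  For a solution `q` of Painlevé II with exponential decay,
the explicit function `h₄` satisfies `L h₄ = ` the stated expression in the
derivatives of `g = log F₂`. -/
theorem h4_solves_inhomogeneous_L (q : ℝ → ℝ) (hq : ContDiff ℝ 4 q)
    (hPII : ∀ x : ℝ, deriv (deriv q) x = x * q x + 2 * q x ^ 3)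
    (C : ℝ) (hdecay : ∀ x : ℝ, 0 ≤ x → |q x| ≤ C * Real.exp (-x) ∧
      |deriv q x| ≤ C * Real.exp (-x)) :
    ∀ u v : ℝ,
      pd1 (pd1 (pd2 (h4Fun q))) (u, v) - pd2 (pd1 (pd2 (h4Fun q))) (u, v) =
        2 * (deriv (deriv (deriv (gFun q))) u * (deriv (deriv (gFun q)) v) ^ 2
            - deriv (deriv (deriv (gFun q))) v * (deriv (deriv (gFun q)) u) ^ 2)
        + deriv (deriv (deriv (gFun q))) u * deriv (deriv (deriv (gFun q))) v *
            (deriv (gFun q) u - deriv (gFun q) v)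
        + deriv (deriv (deriv (deriv (gFun q)))) u * deriv (gFun q) v * deriv (deriv (gFun q)) v
        - deriv (deriv (deriv (deriv (gFun q)))) v * deriv (gFun q) u * deriv (deriv (gFun q)) u
        + (deriv (deriv (deriv (gFun q))) u * deriv (deriv (gFun q)) v
            + deriv (deriv (deriv (gFun q))) v * deriv (deriv (gFun q)) u) * (u - v)
        + 2 * (deriv (deriv (deriv (gFun q))) u * deriv (gFun q) v
            - deriv (deriv (deriv (gFun q))) v * deriv (gFun q) u) := by
  intro u v
  have hqd : Differentiable ℝ q := hq.differentiable (by norm_num)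
  have hq'd : Differentiable ℝ (deriv q) := (hq.deriv' (n := 3)).differentiable (by norm_num)
  have hqO := isBigO_exp_neg_of_abs_le fun x hx => (hdecay x hx).1
  have hq'O := isBigO_exp_neg_of_abs_le fun x hx => (hdecay x hx).2
  have ha := hasDerivAt_integral_Ioi (by fun_prop)
    (integrableOn_Ioi_sq_of_isBigO hqd.continuous hqO)
  have ha' x : HasDerivAt (fun x => -q x ^ 2) (-(2 * q x * deriv q x)) x :=
    ((hqd x).hasDerivAt.pow 2).neg.congr_deriv (by ring)
  have ha'' x : HasDerivAt (fun x => -(2 * q x * deriv q x))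
      (-(2 * (deriv q x ^ 2 + q x * deriv (deriv q) x))) x :=
    (((hqd x).hasDerivAt.const_mul 2).mul (hq'd x).hasDerivAt).neg.congr_deriv (by ring)
  have hφ :=
    hasDerivAt_two_mul_gFun_add_G1Fun_sub_G2Fun hqd.continuous hqO hq'd.continuous hq'O
  have hφ' x : HasDerivAt (fun x => 2 * (∫ α in Ioi x, q α ^ 2) - deriv q x ^ 2 + q x ^ 4)
      (2 * -q x ^ 2 - 2 * deriv q x * deriv (deriv q) x + 4 * q x ^ 3 * deriv q x) x :=
    ((((ha x).const_mul 2).sub ((hq'd x).hasDerivAt.pow 2)).add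
      ((hqd x).hasDerivAt.pow 4)).congr_deriv (by ring)
  rw [h4Fun_eq_h4Of, deriv_eq (hasDerivAt_gFun hqd.continuous hqO), deriv_eq ha, deriv_eq ha',
    deriv_eq ha'', pd2_pd1_pd2_h4Of ha ha' hφ, pd1_pd1_pd2_h4Of ha ha' ha'' hφ hφ',
    pd1_pd1_pd2_h4Of ha ha' ha'' hφ hφ']
  simp only [hPII]
  ring

end
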